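/- Let G ≠ K_n be a simple connected graph on vertex set [n]. A subset A ⊆ [n] intersects every minimal k-cut of G (for all k ≥ 2) if and only if A is a connected dominating set of G, i.e., the induced subgraph G_A is connected and every vertex of [n]\A is adjacent to some vertex of A. -/
import Mathlib


open MvPolynomial

variable {n : ℕ}

/-- Number of connected components of the subgraph of `G` induced on `T`. -/
noncomputable def numComp (G : SimpleGraph (Fin n)) (T : Set (Fin n)) : ℕ :=
  Nat.card (G.induce T).ConnectedComponent

/-- `a` and `b` lie in the same connected component of the subgraph induced on `T`. -/
def SameComp (G : SimpleGraph (Fin n)) (T : Set (Fin n)) (a b : Fin n) : Prop :=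
  ∃ (ha : a ∈ T) (hb : b ∈ T), (G.induce T).Reachable ⟨a, ha⟩ ⟨b, hb⟩

/-- `S` is a minimal `k`-cut of `G`. -/
def IsMinKCut (G : SimpleGraph (Fin n)) (S : Set (Fin n)) (k : ℕ) : Prop :=
  S.Nonempty ∧ S ≠ Set.univ ∧ numComp G Sᶜ = k ∧
    ∀ i ∈ S, numComp G (Sᶜ ∪ {i}) < numComp G Sᶜ

/-- The collection `min(G)`: all minimal `k`-cuts (`k ≥ 2`) together with `∅`. -/
def minSet (G : SimpleGraph (Fin n)) : Set (Set (Fin n)) :=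
  {S | S = ∅ ∨ ∃ k, 2 ≤ k ∧ IsMinKCut G S k}

/-- `A` is a connected dominating set of the subgraph of `G` induced on `T`. -/
def ConnDom (G : SimpleGraph (Fin n)) (T A : Set (Fin n)) : Prop :=
  A ⊆ T ∧ (G.induce A).Connected ∧ ∀ v ∈ T, v ∉ A → ∃ a ∈ A, G.Adj v a

/-- The polynomial ring `K[x_1,…,x_n,y_1,…,y_n]` over `ℂ`. -/
abbrev PolyRing (n : ℕ) := MvPolynomial (Fin n ⊕ Fin n) ℂ

/-- The binomial `f_{i,j} = x_i y_j − x_j y_i`. -/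
noncomputable def fij (i j : Fin n) : PolyRing n :=
  X (Sum.inl i) * X (Sum.inr j) - X (Sum.inl j) * X (Sum.inr i)

/-- The binomial edge ideal of a graph. -/
noncomputable def beIdeal (G : SimpleGraph (Fin n)) : Ideal (PolyRing n) :=
  Ideal.span {g | ∃ i j, G.Adj i j ∧ g = fij i j}

/-- Localized v-number of `I` at `p`. -/
noncomputable def vAt (I p : Ideal (PolyRing n)) : ℕ :=
  sInf {d | ∃ f : PolyRing n, f.IsHomogeneous d ∧ Submodule.colon I (Ideal.span {f}) = p}

/-- v-number of `I`. -/
noncomputable def vNum (I : Ideal (PolyRing n)) : ℕ :=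
  sInf {d | ∃ f : PolyRing n, f.IsHomogeneous d ∧ (Submodule.colon I (Ideal.span {f})).IsPrime}

/-- The graph which is the disjoint union of complete graphs on the connected
components of the subgraph of `G` induced on `Sᶜ`. -/
def tildeG (G : SimpleGraph (Fin n)) (S : Set (Fin n)) : SimpleGraph (Fin n) :=
  SimpleGraph.fromRel (fun a b => SameComp G Sᶜ a b)

/-- The minimal prime `P_S` of the binomial edge ideal. -/
noncomputable def primePS (G : SimpleGraph (Fin n)) (S : Set (Fin n)) : Ideal (PolyRing n) :=
  Ideal.span (({g | ∃ i ∈ S, g = X (Sum.inl i)} ∪ {g | ∃ i ∈ S, g = X (Sum.inr i)} : Set (PolyRing n)))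
    ⊔ beIdeal (tildeG G S)

/-- `B` is a dependent set of the rank-≤2 matroid `M(S)`. -/
def depM (G : SimpleGraph (Fin n)) (S : Set (Fin n)) (B : Set (Fin n)) : Prop :=
  (B ∩ S).Nonempty ∨ (∃ a b, a ∈ B ∧ b ∈ B ∧ a ≠ b ∧ SameComp G Sᶜ a b) ∨ 3 ≤ B.ncard

/-- `A` is a transversal of `{D(M(S'))\D(M(S)) : S' ∈ min(G)\{S}}` consisting of
singletons and pairs outside `D(M(S))`. -/
def IsTransversal (G : SimpleGraph (Fin n)) (S : Set (Fin n))
    (A : Finset (Finset (Fin n))) : Prop :=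
  (∀ e ∈ A, e.card = 1 ∨ e.card = 2) ∧ (∀ e ∈ A, ¬ depM G S ↑e) ∧
    ∀ S' ∈ minSet G, S' ≠ S → ∃ e ∈ A, depM G S' ↑e

/-- The singletons of `A`, viewed as a subset of `[n]`. -/
def A1set (A : Finset (Finset (Fin n))) : Finset (Fin n) :=
  (A.filter fun e => e.card = 1).biUnion id

/-- The pairs of `A`. -/
def A2set (A : Finset (Finset (Fin n))) : Finset (Finset (Fin n)) :=
  A.filter fun e => e.card = 2

/-- The binomial attached to an unordered pair. -/
noncomputable def fPair (e : Finset (Fin n)) : PolyRing n :=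
  if h : e.Nonempty then fij (e.min' h) (e.max' h) else 1

/-- The generator `g_{A,C,D}`. -/
noncomputable def gPoly (A : Finset (Finset (Fin n))) (C D : Finset (Fin n)) : PolyRing n :=
  (∏ k ∈ C, X (Sum.inl k)) * (∏ k ∈ D, X (Sum.inr k)) * ∏ e ∈ A2set A, fPair e

/-- The cycle graph on `[n]`. -/
def cycG (n : ℕ) [NeZero n] : SimpleGraph (Fin n) :=
  SimpleGraph.fromRel (fun i j => j = i + 1)

/-- The connected domination number of `G`. -/
noncomputable def gammaC (G : SimpleGraph (Fin n)) : ℕ :=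
  sInf {k | ∃ A : Set (Fin n), ConnDom G Set.univ A ∧ A.ncard = k}

/-- `S'` is nice with respect to the components `V1`, `V2`. -/
def Nice (G : SimpleGraph (Fin n)) (V1 V2 S' : Set (Fin n)) : Prop :=
  ¬ ∃ i j, i ∈ V1 \ S' ∧ j ∈ V2 \ S' ∧ SameComp G S'ᶜ i j

/-- `V1`, `V2` are the vertex sets of the two connected components of the
subgraph induced on `Sᶜ`. -/
def ComponentsOf (G : SimpleGraph (Fin n)) (S V1 V2 : Set (Fin n)) : Prop :=
  V1 ∪ V2 = Sᶜ ∧ Disjoint V1 V2 ∧ V1.Nonempty ∧ V2.Nonempty ∧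
    (∀ a ∈ V1, ∀ b ∈ V1, SameComp G Sᶜ a b) ∧
    (∀ a ∈ V2, ∀ b ∈ V2, SameComp G Sᶜ a b) ∧
    ∀ a ∈ V1, ∀ b ∈ V2, ¬ SameComp G Sᶜ a b

/-- Significance index of a variable: `x_1 > ⋯ > x_n > y_1 > ⋯ > y_n`. -/
def sigIdx (n : ℕ) : Fin n ⊕ Fin n → ℕ := Sum.elim (fun i => (i : ℕ)) (fun i => n + i)

/-- Lexicographic comparison of exponent vectors. -/
def lexLt (n : ℕ) (a b : (Fin n ⊕ Fin n) →₀ ℕ) : Prop :=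
  ∃ v, a v < b v ∧ ∀ w, sigIdx n w < sigIdx n v → a w = b w

/-- `m` is the leading (lex-largest) exponent of `f`. -/
def IsLeadExp (n : ℕ) (f : PolyRing n) (m : (Fin n ⊕ Fin n) →₀ ℕ) : Prop :=
  m ∈ f.support ∧ ∀ m' ∈ f.support, m' ≠ m → lexLt n m' m

/-- The initial ideal of `I` with respect to the lexicographic order. -/
noncomputable def inIdeal (I : Ideal (PolyRing n)) : Ideal (PolyRing n) :=
  Ideal.span {g | ∃ f ∈ I, ∃ m, IsLeadExp n f m ∧ g = monomial m 1}

/-- A permutation `σ` of `[n]` is `S`-consistent (for `S` an independent set of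
the cycle `C_n`). -/
def SConsistent (n : ℕ) [NeZero n] (S : Set (Fin n)) (σ : Equiv.Perm (Fin n)) : Prop :=
  (∀ x : Fin n, x ∉ S → x + 1 ∈ S →
    ((σ x < σ (x + 2) → x + 3 ∉ S → σ (x + 2) < σ (x + 3)) ∧
     (σ x < σ (x + 2) → x - 1 ∉ S → σ (x - 1) < σ x) ∧
     (σ (x + 2) < σ x → x + 3 ∉ S → σ (x + 3) < σ (x + 2)) ∧
     (σ (x + 2) < σ x → x - 1 ∉ S → σ x < σ (x - 1)))) ∧
  (∀ y : Fin n, y - 1 ∉ S → y ∉ S → y + 1 ∉ S → (σ (y - 1) < σ y ↔ σ y < σ (y + 1)))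

section Helpers
lemma numComp_eq_one {G : SimpleGraph (Fin n)} {T : Set (Fin n)}
    (h : (G.induce T).Connected) : numComp G T = 1 := by
  have hsub : Subsingleton (G.induce T).ConnectedComponent := by
    constructor
    intro c d
    refine SimpleGraph.ConnectedComponent.ind₂ (fun u v => ?_) c d
    exact SimpleGraph.ConnectedComponent.sound (h.preconnected u v)
  have hne : Nonempty (G.induce T).ConnectedComponent := by
    obtain ⟨u⟩ := h.nonempty
    exact ⟨(G.induce T).connectedComponentMk u⟩
  exact Nat.card_unique

lemma two_le_numComp {G : SimpleGraph (Fin n)} {T : Set (Fin n)} {u v : T}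
    (h : ¬ (G.induce T).Reachable u v) : 2 ≤ numComp G T := by
  have : Nontrivial (G.induce T).ConnectedComponent := by
    refine ⟨(G.induce T).connectedComponentMk u, (G.induce T).connectedComponentMk v, ?_⟩
    intro hc
    exact h (SimpleGraph.ConnectedComponent.eq.mp hc)
  exact Finite.one_lt_card_iff_nontrivial.mpr this

lemma numComp_univ {G : SimpleGraph (Fin n)} (hG : G.Connected) : numComp G Set.univ = 1 :=
  numComp_eq_one (((G.induceUnivIso).connected_iff).mpr hG)

/-- Shrinking a cut to a minimal cut. -/
lemma shrink (G : SimpleGraph (Fin n)) (hG : G.Connected) :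
    ∀ m (S : Set (Fin n)), S.ncard ≤ m → 2 ≤ numComp G Sᶜ →
      ∃ S' ⊆ S, ∃ k, 2 ≤ k ∧ IsMinKCut G S' k := by
  intro m
  induction m with
  | zero =>
    intro S hle h2
    have : S = ∅ := by
      have := Set.ncard_eq_zero (Set.toFinite S) |>.mp (Nat.le_zero.mp hle)
      exact this
    rw [this] at h2
    simp only [Set.compl_empty] at h2
    rw [numComp_univ hG] at h2
    omega
  | succ m ih =>
    intro S hle h2
    by_cases hex : ∃ i ∈ S, 2 ≤ numComp G (S \ {i})ᶜ
    · obtain ⟨i, hi, h2'⟩ := hex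
      have hlt : (S \ {i}).ncard < S.ncard := Set.ncard_diff_singleton_lt_of_mem hi
      obtain ⟨S', hsub, hk⟩ := ih (S \ {i}) (by omega) h2'
      exact ⟨S', hsub.trans Set.diff_subset, hk⟩
    · push_neg at hex
      refine ⟨S, le_refl _, numComp G Sᶜ, h2, ?_, ?_, rfl, ?_⟩
      · rcases Set.eq_empty_or_nonempty S with h | h
        · exfalso; rw [h] at h2; simp only [Set.compl_empty] at h2
          rw [numComp_univ hG] at h2; omega
        · exact h
      · intro hS
        have hTe : Sᶜ = ∅ := by rw [hS]; simp
        have hpos : 0 < Nat.card (G.induce Sᶜ).ConnectedComponent := by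
          unfold numComp at h2; omega
        have : Nonempty (G.induce Sᶜ).ConnectedComponent :=
          (Nat.card_pos_iff.mp hpos).1
        obtain ⟨c⟩ := this
        obtain ⟨u, -⟩ := c.exists_rep
        obtain ⟨x, hx⟩ := u
        rw [hS] at hx
        simp at hx
      · intro i hi
        have heq : Sᶜ ∪ {i} = (S \ {i})ᶜ := by
          ext x; simp [Set.mem_diff, Set.mem_compl_iff]; tauto
        rw [heq]
        have := hex i hi
        omega

/-- Walk invariant: a set closed under stepping inside `Sᶜ` absorbs walks. -/
lemma walk_closed {G : SimpleGraph (Fin n)} {S A1 : Set (Fin n)}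
    (hcl : ∀ u ∈ A1, ∀ w, G.Adj u w → w ∈ Sᶜ → w ∈ A1) :
    ∀ {u t : ↥Sᶜ} (_ : (G.induce Sᶜ).Walk u t), (u : Fin n) ∈ A1 → (t : Fin n) ∈ A1 := by
  intro u t p
  induction p with
  | nil => exact id
  | @cons u x t h p ih =>
    intro hu
    have hadj : G.Adj (u : Fin n) (x : Fin n) := h
    exact ih (hcl _ hu _ hadj x.2)

lemma nbhd_two_le {G : SimpleGraph (Fin n)} {v w : Fin n} (hvw : v ≠ w)
    (hnadj : ¬ G.Adj v w) : 2 ≤ numComp G {u | G.Adj v u}ᶜ := by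
  set S : Set (Fin n) := {u | G.Adj v u} with hSdef
  have hv : v ∈ Sᶜ := fun h => G.irrefl h
  have hw : w ∈ Sᶜ := hnadj
  refine two_le_numComp (u := ⟨v, hv⟩) (v := ⟨w, hw⟩) ?_
  intro hr
  obtain ⟨p⟩ := hr
  have := walk_closed (A1 := ({v} : Set (Fin n))) ?_ p (Set.mem_singleton v)
  · exact hvw (this.symm)
  · intro u hu z hadj hz
    rw [Set.mem_singleton_iff] at hu
    subst hu
    exact absurd hadj hz

end Helpers

/-- `A` meets every minimal k-cut iff it is a connected dominating set. -/
theorem stmt1 {n : ℕ} (G : SimpleGraph (Fin n)) (hG : G.Connected) (hne : G ≠ ⊤)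
    (A : Set (Fin n)) :
    (∀ S : Set (Fin n), (∃ k, 2 ≤ k ∧ IsMinKCut G S k) → (A ∩ S).Nonempty) ↔
      ConnDom G Set.univ A := by
  constructor
  · intro hyp
    -- there is a nonadjacent pair
    obtain ⟨v0, w0, hvw0, hnadj0⟩ : ∃ v w : Fin n, v ≠ w ∧ ¬ G.Adj v w := by
      by_contra h
      push_neg at h
      apply hne
      ext v w
      simp only [SimpleGraph.top_adj]
      exact ⟨fun h' => h'.ne, fun h' => h v w h'⟩
    -- A is nonempty
    have hAne : A.Nonempty := by
      obtain ⟨S', hS'sub, hk⟩ := shrink G hG _ {u | G.Adj v0 u} le_rfl (nbhd_two_le hvw0 hnadj0)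
      obtain ⟨a, ha, -⟩ := hyp S' hk
      exact ⟨a, ha⟩
    -- domination
    have hdom : ∀ v : Fin n, v ∉ A → ∃ a ∈ A, G.Adj v a := by
      intro v hvA
      by_contra hno
      push_neg at hno
      by_cases hex : ∃ w, w ≠ v ∧ ¬ G.Adj v w
      · obtain ⟨w, hwv, hnadj⟩ := hex
        obtain ⟨S', hS'sub, hk⟩ :=
          shrink G hG _ {u | G.Adj v u} le_rfl (nbhd_two_le (Ne.symm hwv) hnadj)
        obtain ⟨a, haA, haS'⟩ := hyp S' hk
        exact hno a haA (hS'sub haS')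
      · push_neg at hex
        obtain ⟨a, haA⟩ := hAne
        have hav : a ≠ v := fun h => hvA (h ▸ haA)
        exact hno a haA ((hex a hav))
    -- connectivity
    obtain ⟨a0, ha0⟩ := hAne
    set A1 : Set (Fin n) :=
      {x | ∃ hx : x ∈ A, (G.induce A).Reachable ⟨a0, ha0⟩ ⟨x, hx⟩} with hA1def
    have hA1sub : A1 ⊆ A := fun x hx => hx.1
    have ha0A1 : a0 ∈ A1 := ⟨ha0, SimpleGraph.Reachable.refl _⟩
    have hA1A : A1 = A := by
      by_contra hAne'
      obtain ⟨b, hbA, hbA1⟩ : ∃ b, b ∈ A ∧ b ∉ A1 := by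
        by_contra h
        push_neg at h
        exact hAne' (Set.Subset.antisymm hA1sub h)
      set S : Set (Fin n) := {u | u ∉ A ∧ ∃ a ∈ A1, G.Adj u a} with hSdef
      have ha0S : a0 ∈ Sᶜ := fun h => h.1 ha0
      have hbS : b ∈ Sᶜ := fun h => h.1 hbA
      have hcl : ∀ u ∈ A1, ∀ w, G.Adj u w → w ∈ Sᶜ → w ∈ A1 := by
        intro u hu w hadj hw
        by_cases hwA : w ∈ A
        · obtain ⟨huA, hur⟩ := hu
          have hadj' : (G.induce A).Adj ⟨u, huA⟩ ⟨w, hwA⟩ := hadj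
          exact ⟨hwA, hur.trans hadj'.reachable⟩
        · exact absurd ⟨hwA, u, hu, hadj.symm⟩ hw
      have h2 : 2 ≤ numComp G Sᶜ := by
        refine two_le_numComp (u := ⟨a0, ha0S⟩) (v := ⟨b, hbS⟩) ?_
        intro hr
        obtain ⟨p⟩ := hr
        exact hbA1 (walk_closed hcl p ha0A1)
      obtain ⟨S', hS'sub, hk⟩ := shrink G hG _ S le_rfl h2
      obtain ⟨a, haA, haS'⟩ := hyp S' hk
      exact (hS'sub haS').1 haA
    have hconn : (G.induce A).Connected := by
      rw [SimpleGraph.connected_iff]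
      refine ⟨?_, ⟨⟨a0, ha0⟩⟩⟩
      intro x y
      obtain ⟨x, hx⟩ := x
      obtain ⟨y, hy⟩ := y
      have hrx : (G.induce A).Reachable ⟨a0, ha0⟩ ⟨x, hx⟩ := by
          have := hA1A ▸ hx
          exact this.2
      have hry : (G.induce A).Reachable ⟨a0, ha0⟩ ⟨y, hy⟩ := by
        have := hA1A ▸ hy
        exact this.2
      exact hrx.symm.trans hry
    exact ⟨Set.subset_univ A, hconn, fun v _ hv => hdom v hv⟩
  · rintro ⟨-, hconn, hdom⟩ S ⟨k, hk2, hSne, hSuniv, hScomp, hSmin⟩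
    by_contra hAS
    rw [Set.not_nonempty_iff_eq_empty] at hAS
    have hAsub : A ⊆ Sᶜ := by
      intro x hx hxS
      exact absurd (Set.mem_inter hx hxS) (hAS ▸ Set.notMem_empty x)
    obtain ⟨a0s⟩ := hconn.nonempty
    obtain ⟨a0, ha0⟩ := a0s
    let F : G.induce A →g G.induce Sᶜ :=
      ⟨fun x => ⟨x.1, hAsub x.2⟩, fun {a b} h => h⟩
    have hreach : ∀ (x : Fin n) (hx : x ∈ Sᶜ),
        (G.induce Sᶜ).Reachable ⟨x, hx⟩ ⟨a0, hAsub ha0⟩ := by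
      intro x hx
      by_cases hxA : x ∈ A
      · exact (hconn.preconnected ⟨x, hxA⟩ ⟨a0, ha0⟩).map F
      · obtain ⟨a, haA, hadj⟩ := hdom x (Set.mem_univ x) hxA
        have hstep : (G.induce Sᶜ).Adj ⟨x, hx⟩ ⟨a, hAsub haA⟩ := hadj
        exact hstep.reachable.trans ((hconn.preconnected ⟨a, haA⟩ ⟨a0, ha0⟩).map F)
    have hScon : (G.induce Sᶜ).Connected := by
      rw [SimpleGraph.connected_iff]
      refine ⟨?_, ⟨⟨a0, hAsub ha0⟩⟩⟩
      intro x y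
      obtain ⟨x, hx⟩ := x
      obtain ⟨y, hy⟩ := y
      exact (hreach x hx).trans (hreach y hy).symm
    have := numComp_eq_one hScon
    omega
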